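/- arXiv:2104.07552 — 3 statements merged into one kernel-verified Lean document; each statement's English description precedes it below -/
import Mathlib

section
/- The probability density function f(q) = C ∫_0^∞ s^ν e^{−νs²/2} (∫_{−∞}^∞ e^{−((z+qs)² + z²)/2} dz) ds, where C = (4√(2π)(ν/2)^{ν/2})/(Γ(ν/2)·√(2π)·2π), equals (√2 · ν^{ν/2} · Γ((ν+1)/2)) / (√π · Γ(ν/2) · (ν + q²/2)^{(ν+1)/2}) for every q ≥ 0 and every positive integer ν. -/
open Real MeasureTheory

/-!
Completing the square, `((z + c)² + z²)/2 = (z + c/2)² + c²/4`, the inner Gaussian integral is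
`√π e^{-q²s²/4}`. The outer integral then becomes the Gamma moment
`∫₀^∞ s^ν e^{-(A/2) s²} ds = Γ((ν+1)/2) / (2 (A/2)^{(ν+1)/2})` with `A = ν + q²/2`, and what remains
is bookkeeping of powers of `2` and `π`.
-/

theorem integral_exp_neg_sq_add_sq_div_two (c : ℝ) :
    ∫ z : ℝ, exp (-(((z + c) ^ 2 + z ^ 2) / 2)) = exp (-c ^ 2 / 4) * √π := by
  have complete_square : ∀ z : ℝ,
      exp (-(((z + c) ^ 2 + z ^ 2) / 2)) = exp (-c ^ 2 / 4) * exp (-1 * (z + c / 2) ^ 2) := by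
    intro z
    rw [← exp_add]
    ring_nf
  simp_rw [complete_square, integral_const_mul]
  rw [integral_add_right_eq_self (fun x : ℝ => exp (-1 * x ^ 2)) (c / 2), integral_gaussian,
    div_one]

theorem integral_rpow_mul_exp_neg_mul_sq_Ioi {r b : ℝ} (hr : -1 < r) (hb : 0 < b) :
    ∫ s in Set.Ioi (0 : ℝ), s ^ r * exp (-b * s ^ 2)
      = Gamma ((r + 1) / 2) / (2 * b ^ ((r + 1) / 2)) := by
  have h := integral_rpow_mul_exp_neg_mul_rpow two_pos hr hb
  simp only [rpow_two] at h
  rw [h, neg_div, rpow_neg hb.le]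
  field_simp

theorem studentized_range_density_k2_general
    (ν : ℕ) (hν : 0 < ν) (q : ℝ) :
    (4 * Real.sqrt (2 * π) * ((ν : ℝ) / 2) ^ ((ν : ℝ) / 2) /
        (Real.Gamma ((ν : ℝ) / 2) * Real.sqrt (2 * π) * (2 * π))) *
      ∫ s in Set.Ioi (0 : ℝ),
        s ^ (ν : ℕ) * Real.exp (-((ν : ℝ) * s ^ 2) / 2) *
          ∫ z : ℝ, Real.exp (-(((z + q * s) ^ 2 + z ^ 2) / 2))
    = Real.sqrt 2 * (ν : ℝ) ^ ((ν : ℝ) / 2) * Real.Gamma (((ν : ℝ) + 1) / 2) /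
        (Real.sqrt π * Real.Gamma ((ν : ℝ) / 2) *
          ((ν : ℝ) + q ^ 2 / 2) ^ (((ν : ℝ) + 1) / 2)) := by
  set A := (ν : ℝ) + q ^ 2 / 2
  have hν0 : (0 : ℝ) < ν := Nat.cast_pos.mpr hν
  have hA : 0 < A := by positivity
  have integrand : ∀ s : ℝ,
      s ^ ν * exp (-(ν * s ^ 2) / 2) * ∫ z : ℝ, exp (-(((z + q * s) ^ 2 + z ^ 2) / 2))
        = √π * (s ^ (ν : ℝ) * exp (-(A / 2) * s ^ 2)) := by
    intro s
    rw [integral_exp_neg_sq_add_sq_div_two, rpow_natCast,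
      show -(A / 2) * s ^ 2 = -(ν * s ^ 2) / 2 + -(q * s) ^ 2 / 4 by ring, exp_add]
    ring
  simp_rw [integrand]
  rw [integral_const_mul, integral_rpow_mul_exp_neg_mul_sq_Ioi (by linarith) (by positivity),
    div_rpow hA.le zero_le_two, div_rpow hν0.le zero_le_two,
    show ((ν : ℝ) + 1) / 2 = ν / 2 + 1 / 2 by ring, rpow_add two_pos, ← sqrt_eq_rpow]
  field_simp
  rw [sq_sqrt pi_pos.le]
  ring

/-- The density of the studentized range with `k = 2` groups and `ν` degrees of
freedom evaluates, via the substitutions `u = √2 z`, `t = s²`, `y = (ν + q²/2)t/2`,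
to the stated closed form. -/
theorem studentized_range_density_k2
    (ν : ℕ) (hν : 0 < ν) (q : ℝ) (hq : 0 ≤ q) :
    (4 * Real.sqrt (2 * π) * ((ν : ℝ) / 2) ^ ((ν : ℝ) / 2) /
        (Real.Gamma ((ν : ℝ) / 2) * Real.sqrt (2 * π) * (2 * π))) *
      ∫ s in Set.Ioi (0 : ℝ),
        s ^ (ν : ℕ) * Real.exp (-((ν : ℝ) * s ^ 2) / 2) *
          ∫ z : ℝ, Real.exp (-(((z + q * s) ^ 2 + z ^ 2) / 2))
    = Real.sqrt 2 * (ν : ℝ) ^ ((ν : ℝ) / 2) * Real.Gamma (((ν : ℝ) + 1) / 2) /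
        (Real.sqrt π * Real.Gamma ((ν : ℝ) / 2) *
          ((ν : ℝ) + q ^ 2 / 2) ^ (((ν : ℝ) + 1) / 2)) :=
  studentized_range_density_k2_general ν hν q
end

section
/- Under the assumptions n_j = n/k for all j, x̄_1 = ... = x̄_{k/2} = 1, x̄_{k/2+1} = ... = x̄_k = 0 (k even), and MSE = s², the pair of strict inequalities (n(k−1)F)^{−1} Σ_{j<i} n_j n_i (x̄_j − x̄_i)² > s² > 2Q^{−2}(x̄_i − x̄_j)² n_i n_j/(n_i + n_j) (for a pair i,j with x̄_i − x̄_j = 1) is satisfiable by some s > 0 if and only if Q²/F > 4(1 − 1/k), where F = F_crit(α, k−1, n−k) > 0 and Q = Q(α, k, n−k) > 0. -/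
/-- Case (i): with equal group sizes `n/k`, half the group means `1` and half `0`,
and `MSE = s²`, the double strict inequality (ANOVA rejects while Tukey–Kramer
does not, for a pair of groups with mean difference `1`) is satisfiable by some
`s > 0` iff `Q²/F > 4(1 − 1/k)`. -/
theorem case_i_feasibility
    (k n : ℕ) (hk : 2 ≤ k) (hke : Even k) (hdvd : k ∣ n) (hn : 0 < n)
    (F Q : ℝ) (hF : 0 < F) (hQ : 0 < Q) :
    (∃ s : ℝ, 0 < s ∧
        ((n : ℝ) * ((k : ℝ) - 1) * F)⁻¹ *
            (((n / k : ℕ) : ℝ) ^ 2 * ((k : ℝ) ^ 2 / 4)) > s ^ 2 ∧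
        s ^ 2 > 2 * (Q ^ 2)⁻¹ * (1 : ℝ) ^ 2 *
            (((n / k : ℕ) : ℝ) * ((n / k : ℕ) : ℝ) /
              (((n / k : ℕ) : ℝ) + ((n / k : ℕ) : ℝ)))) ↔
    Q ^ 2 / F > 4 * (1 - 1 / (k : ℝ)) := by
  have hm : 0 < n / k := Nat.div_pos (Nat.le_of_dvd hn hdvd) (by omega)
  set c : ℝ := ((n / k : ℕ) : ℝ) with hcdef
  have hc : 0 < c := by rw [hcdef]; exact_mod_cast hm
  have hk0 : (0:ℝ) < (k:ℝ) := by exact_mod_cast (by omega : 0 < k)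
  have hk1 : (1:ℝ) ≤ (k:ℝ) - 1 := by
    have : (2:ℝ) ≤ (k:ℝ) := by exact_mod_cast hk
    linarith
  have hnck : (n : ℝ) = (k:ℝ) * c := by
    rw [hcdef]
    exact_mod_cast (Nat.mul_div_cancel' hdvd).symm
  set U : ℝ := ((n : ℝ) * ((k : ℝ) - 1) * F)⁻¹ * (c ^ 2 * ((k : ℝ) ^ 2 / 4)) with hU
  set L : ℝ := 2 * (Q ^ 2)⁻¹ * (1 : ℝ) ^ 2 * (c * c / (c + c)) with hL
  clear_value U L
  have hLval : L = c / Q ^ 2 := by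
    rw [hL]; field_simp; ring
  have hUval : U = c * (k:ℝ) / (4 * ((k:ℝ) - 1) * F) := by
    rw [hU, hnck]; field_simp
  have hLpos : 0 < L := by
    rw [hLval]; positivity
  constructor
  · rintro ⟨s, _, h1, h2⟩
    have hUL : L < U := lt_trans h2 h1
    rw [hLval, hUval] at hUL
    rw [div_lt_div_iff₀ (by positivity) (by positivity)] at hUL
    have hinv : (k:ℝ) * (1 / (k:ℝ)) = 1 := by field_simp
    have hkey : 4 * ((k:ℝ) - 1) * F < (k:ℝ) * Q ^ 2 := by nlinarith
    rw [gt_iff_lt, lt_div_iff₀ hF]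
    nlinarith
  · intro h
    rw [gt_iff_lt, lt_div_iff₀ hF] at h
    have hinv : (k:ℝ) * (1 / (k:ℝ)) = 1 := by field_simp
    have hkey : 4 * ((k:ℝ) - 1) * F < (k:ℝ) * Q ^ 2 := by nlinarith
    have hUL : L < U := by
      rw [hLval, hUval, div_lt_div_iff₀ (by positivity) (by positivity)]
      nlinarith
    refine ⟨Real.sqrt ((L + U) / 2), Real.sqrt_pos.mpr (by linarith), ?_, ?_⟩
    · rw [Real.sq_sqrt (by linarith)]; linarith
    · rw [Real.sq_sqrt (by linarith)]; linarith
end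

section
/- Under the assumptions n_j = n/k for all j, x̄_1 = 1, x̄_2 = ... = x̄_k = 0, and MSE = s², the pair of strict inequalities (n(k−1)F)^{−1} Σ_{j<i} n_j n_i (x̄_j − x̄_i)² < s² < 2Q^{−2}(x̄_1 − x̄_2)² n_1 n_2/(n_1 + n_2) is satisfiable by some s > 0 if and only if Q² < kF, where F = F_crit(α, k−1, n−k) > 0 and Q = Q(α, k, n−k) > 0. -/
/-- Case (ii): with equal group sizes `n/k`, group means `x̄₁ = 1`,
`x̄₂ = ⋯ = x̄ₖ = 0`, and `MSE = s²`, the double strict inequality (Tukey–Kramer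
rejects while ANOVA does not) is satisfiable by some `s > 0` iff `Q² < kF`. -/
theorem case_ii_feasibility
    (k n : ℕ) (hk : 2 ≤ k) (hdvd : k ∣ n) (hn : 0 < n)
    (F Q : ℝ) (hF : 0 < F) (hQ : 0 < Q) :
    (∃ s : ℝ, 0 < s ∧
        ((n : ℝ) * ((k : ℝ) - 1) * F)⁻¹ *
            (((k : ℝ) - 1) * ((n / k : ℕ) : ℝ) ^ 2) < s ^ 2 ∧
        s ^ 2 < 2 * (Q ^ 2)⁻¹ *
            (((n / k : ℕ) : ℝ) * ((n / k : ℕ) : ℝ) /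
              (((n / k : ℕ) : ℝ) + ((n / k : ℕ) : ℝ)))) ↔
    Q ^ 2 < (k : ℝ) * F := by
  have hkn : k ≤ n := Nat.le_of_dvd hn hdvd
  have hmpos : 0 < n / k := Nat.div_pos hkn (by omega)
  set m : ℝ := ((n / k : ℕ) : ℝ) with hm
  have hm0 : 0 < m := by rw [hm]; exact_mod_cast hmpos
  have hnkm : (n : ℝ) = (k : ℝ) * m := by
    rw [hm]; exact_mod_cast (Nat.mul_div_cancel' hdvd).symm
  have hk1 : (1 : ℝ) < (k : ℝ) := by exact_mod_cast by omega
  have hk1ne : (k : ℝ) - 1 ≠ 0 := by linarith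
  -- simplify both bounds
  have hA : ((n : ℝ) * ((k : ℝ) - 1) * F)⁻¹ * (((k : ℝ) - 1) * m ^ 2)
      = m / ((k : ℝ) * F) := by
    rw [hnkm]
    field_simp
  have hB : 2 * (Q ^ 2)⁻¹ * (m * m / (m + m)) = m / Q ^ 2 := by
    field_simp; ring
  rw [hA, hB]
  have hApos : 0 < m / ((k : ℝ) * F) := by positivity
  have hBpos : 0 < m / Q ^ 2 := by positivity
  constructor
  · rintro ⟨s, _, h1, h2⟩
    have hAB : m / ((k : ℝ) * F) < m / Q ^ 2 := lt_trans h1 h2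
    have := (div_lt_div_iff₀ (by positivity) (by positivity)).mp hAB
    nlinarith
  · intro h
    have hAB : m / ((k : ℝ) * F) < m / Q ^ 2 := by
      apply div_lt_div_of_pos_left hm0 (by positivity) h
    refine ⟨Real.sqrt ((m / ((k : ℝ) * F) + m / Q ^ 2) / 2), ?_, ?_, ?_⟩
    · positivity
    · rw [Real.sq_sqrt (by positivity)]; linarith
    · rw [Real.sq_sqrt (by positivity)]; linarith
end
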